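/- arXiv:2511.17625 — 2 statements merged into one kernel-verified Lean document; each statement's English description precedes it below -/
import Mathlib

section
/- Let O be finite and nonempty, and suppose the selected option o* lies in the set of options O^{(r)} that each minimize some agent's normalized effective cost J_i^w (i.e., o* is generated by some agent as its effective-cost minimizer). Let o† minimize the normalized shared score S_w̄(o) = (wᵀJ(o))/α over all of O. Then 0 ≤ S_w̄(o*) − S_w̄(o†) ≤ B_max/α, where B_max is the maximum individual cost spread and α = ‖w‖₁ + 1. -/
/-- Selection error bound: if the selected option `o*` minimizes some agent's normalized
effective cost `S(o) + J_i(o)/α`, and `o†` minimizes the normalized shared score `S`,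
then `0 ≤ S(o*) − S(o†) ≤ B_max / α`. -/
theorem stmt5 {O : Type*} [Fintype O] [Nonempty O] {n : ℕ}
    (J : Fin n → O → ℝ) (w : Fin n → ℝ) (hw : ∀ i, 0 ≤ w i)
    (α : ℝ) (hα : α = (∑ i, w i) + 1)
    (S : O → ℝ) (hS : ∀ o, S o = (∑ i, w i * J i o) / α)
    (Bmax : ℝ) (hB : ∀ i o o', |J i o - J i o'| ≤ Bmax)
    (ostar odag : O)
    (hstar : ∃ i, ∀ o, S ostar + J i ostar / α ≤ S o + J i o / α)
    (hdag : ∀ o, S odag ≤ S o) :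
    0 ≤ S ostar - S odag ∧ S ostar - S odag ≤ Bmax / α := by
  have hαpos : 0 < α := by
    have : (0:ℝ) ≤ ∑ i, w i := Finset.sum_nonneg fun i _ => hw i
    linarith [hα]
  refine ⟨by linarith [hdag ostar], ?_⟩
  obtain ⟨i, hi⟩ := hstar
  have h1 := hi odag
  have h2 : J i odag - J i ostar ≤ Bmax := (abs_le.mp (hB i odag ostar)).2 |>.trans_eq' (by ring) |>.trans (le_refl _)
  have h3 : J i odag - J i ostar ≤ Bmax := le_trans (le_abs_self _) (hB i odag ostar)
  have : S ostar - S odag ≤ (J i odag - J i ostar) / α := by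
    rw [sub_div]
    linarith [h1]
  calc S ostar - S odag ≤ (J i odag - J i ostar) / α := this
    _ ≤ Bmax / α := by gcongr
end

section
/- Let α ≥ 1 and let each agent i choose o_i minimizing J_i^w(o) = S(o) + J_i(o)/α over a finite nonempty set O, where S : O → ℝ is a common shared score. Then for any two agents i, j, the shared scores of their chosen options differ by at most (B_i + B_j)/α ≤ 2B_max/α, where B_i is agent i's cost spread. -/
/-- If each agent `i` chooses `o_i` minimizing the effective cost `S(o) + J_i(o)/α`,
then the shared scores of any two chosen options differ by at most
`(B_i + B_j)/α ≤ 2 B_max / α`. -/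
theorem stmt12 {O : Type*} [Fintype O] [Nonempty O] {n : ℕ}
    (S : O → ℝ) (J : Fin n → O → ℝ) (α : ℝ) (hα : 1 ≤ α)
    (B : Fin n → ℝ) (hB : ∀ i o o', |J i o - J i o'| ≤ B i)
    (Bmax : ℝ) (hBmax : ∀ i, B i ≤ Bmax)
    (choice : Fin n → O)
    (hchoice : ∀ i o, S (choice i) + J i (choice i) / α ≤ S o + J i o / α) :
    ∀ i j, |S (choice i) - S (choice j)| ≤ (B i + B j) / α ∧
      (B i + B j) / α ≤ 2 * Bmax / α := by
  intro i j
  have hα0 : 0 < α := lt_of_lt_of_le one_pos hα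
  have key : ∀ a b : Fin n, S (choice a) - S (choice b) ≤ B a / α := by
    intro a b
    have h1 := hchoice a (choice b)
    have h2 : J a (choice b) - J a (choice a) ≤ B a :=
      le_trans (le_abs_self _) (hB a _ _)
    rw [le_div_iff₀ hα0]
    have h3 : (J a (choice b) - J a (choice a)) / α * α = J a (choice b) - J a (choice a) :=
      div_mul_cancel₀ _ hα0.ne'
    have h4 : S (choice a) - S (choice b) ≤ (J a (choice b) - J a (choice a)) / α := by
      rw [sub_div]; linarith
    nlinarith [mul_le_mul_of_nonneg_right h4 hα0.le]
  constructor
  · rw [abs_sub_le_iff, add_div]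
    constructor
    · linarith [key i j, div_nonneg (le_trans (abs_nonneg _) (hB j (choice i) (choice i))) hα0.le]
    · linarith [key j i, div_nonneg (le_trans (abs_nonneg _) (hB i (choice i) (choice i))) hα0.le]
  · have hi := hBmax i
    have hj := hBmax j
    apply div_le_div_of_nonneg_right _ hα0.le
    linarith
end
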